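/- The free energy Φ with Φ'(u) = arctanh(u) − (z+1)γu has exactly one critical point (u = 0) when γ ≤ 1/(z+1), and Φ' has three zeros (0 and ±u* for some u* ∈ (0,1)) when γ > 1/(z+1). -/
import Mathlib


open Set

/-- The inverse hyperbolic tangent, `arctanh u = (1/2) log((1+u)/(1−u))`. -/
noncomputable def arctanh (u : ℝ) : ℝ := (1 / 2) * Real.log ((1 + u) / (1 - u))

lemma arctanh_zero : arctanh 0 = 0 := by simp [arctanh]

lemma arctanh_neg (u : ℝ) : arctanh (-u) = -arctanh u := by
  unfold arctanh
  rw [show (1 + -u) / (1 - -u) = ((1 + u) / (1 - u))⁻¹ by rw [inv_div]; ring_nf,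
    Real.log_inv]
  ring

lemma hasDerivAt_arctanh_sub (c : ℝ) {u : ℝ} (hu : u ∈ Ioo (-1 : ℝ) 1) :
    HasDerivAt (fun x => arctanh x - c * x) (1 / (1 - u ^ 2) - c) u := by
  obtain ⟨h1, h2⟩ := hu
  have hp1 : (0 : ℝ) < 1 + u := by linarith
  have hp2 : (0 : ℝ) < 1 - u := by linarith
  have hlog1 : HasDerivAt (fun x : ℝ => Real.log (1 + x)) (1 / (1 + u)) u := by
    have := ((hasDerivAt_id u).const_add 1).log (ne_of_gt hp1)
    simpa using this
  have hlog2 : HasDerivAt (fun x : ℝ => Real.log (1 - x)) (-1 / (1 - u)) u := by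
    have := ((hasDerivAt_id u).const_sub 1).log (ne_of_gt hp2)
    simpa [neg_div] using this
  have hcx : HasDerivAt (fun x : ℝ => c * x) c u := by
    simpa using (hasDerivAt_id u).const_mul c
  have hg : HasDerivAt
      (fun x : ℝ => (1 / 2) * (Real.log (1 + x) - Real.log (1 - x)) - c * x)
      ((1 / 2) * (1 / (1 + u) - -1 / (1 - u)) - c) u :=
    ((hlog1.sub hlog2).const_mul (1 / 2)).sub hcx
  have heq : (fun x : ℝ => arctanh x - c * x)
      =ᶠ[nhds u] (fun x : ℝ => (1 / 2) * (Real.log (1 + x) - Real.log (1 - x)) - c * x) := by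
    filter_upwards [Ioo_mem_nhds h1 h2] with x hx
    have hx1 : (0 : ℝ) < 1 + x := by linarith [hx.1]
    have hx2 : (0 : ℝ) < 1 - x := by linarith [hx.2]
    unfold arctanh
    rw [Real.log_div (ne_of_gt hx1) (ne_of_gt hx2)]
  have hval : (1 / 2) * (1 / (1 + u) - -1 / (1 - u)) - c = 1 / (1 - u ^ 2) - c := by
    have h3 : (1 : ℝ) - u ^ 2 ≠ 0 := by nlinarith
    field_simp
    ring
  rw [← hval]
  exact hg.congr_of_eventuallyEq heq

lemma contOn_arctanh_sub (c : ℝ) {s : Set ℝ} (hs : s ⊆ Ioo (-1 : ℝ) 1) :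
    ContinuousOn (fun x => arctanh x - c * x) s := fun x hx =>
  ((hasDerivAt_arctanh_sub c (hs hx)).continuousAt).continuousWithinAt

lemma deriv_arctanh_sub (c : ℝ) {u : ℝ} (hu : u ∈ Ioo (-1 : ℝ) 1) :
    deriv (fun x => arctanh x - c * x) u = 1 / (1 - u ^ 2) - c :=
  (hasDerivAt_arctanh_sub c hu).deriv

set_option maxHeartbeats 1000000 in
/-- The free energy derivative `Φ'(u) = arctanh u − (z+1) γ u` on `(−1,1)`
has exactly one zero (`u = 0`) when `γ ≤ 1/(z+1)`, and has three zeros (`0` and `±u*`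
for some `u* ∈ (0,1)`) when `γ > 1/(z+1)`. -/
theorem free_energy_critical_points (z : ℕ) (hz : 1 ≤ z) (γ : ℝ) (hγ : 0 < γ) :
    (γ ≤ 1 / ((z : ℝ) + 1) →
      ∀ u ∈ Ioo (-1 : ℝ) 1, (arctanh u - ((z : ℝ) + 1) * γ * u = 0 ↔ u = 0)) ∧
    (1 / ((z : ℝ) + 1) < γ →
      ∃ ustar ∈ Ioo (0 : ℝ) 1,
        ∀ u ∈ Ioo (-1 : ℝ) 1,
          (arctanh u - ((z : ℝ) + 1) * γ * u = 0 ↔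
            u = 0 ∨ u = ustar ∨ u = -ustar)) := by
  set c : ℝ := ((z : ℝ) + 1) * γ with hc_def
  have hz1 : (0 : ℝ) < (z : ℝ) + 1 := by positivity
  have hcpos : 0 < c := by positivity
  set g : ℝ → ℝ := fun x => arctanh x - c * x with hg_def
  have hg0 : g 0 = 0 := by simp [hg_def, arctanh_zero]
  have hgodd : ∀ u : ℝ, g (-u) = -g u := by
    intro u; simp [hg_def, arctanh_neg]; ring
  constructor
  · -- case γ ≤ 1/(z+1), i.e. c ≤ 1
    intro hγle u hu
    have hc1 : c ≤ 1 := by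
      rw [hc_def]
      calc ((z : ℝ) + 1) * γ ≤ ((z : ℝ) + 1) * (1 / ((z : ℝ) + 1)) := by
            exact mul_le_mul_of_nonneg_left hγle (le_of_lt hz1)
        _ = 1 := by field_simp
    -- g strictly monotone on [0,1) and on (-1,0]
    have hmono1 : StrictMonoOn g (Ico 0 1) := by
      apply strictMonoOn_of_deriv_pos (convex_Ico 0 1)
        (contOn_arctanh_sub c (fun x hx => ⟨by linarith [hx.1], hx.2⟩))
      intro x hx
      rw [interior_Ico] at hx
      have hx' : x ∈ Ioo (-1 : ℝ) 1 := ⟨by linarith [hx.1], hx.2⟩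
      rw [deriv_arctanh_sub c hx']
      have h1 : 0 < 1 - x ^ 2 := by nlinarith [hx.1, hx.2]
      have h2 : 1 - x ^ 2 < 1 := by nlinarith [hx.1]
      have : 1 < 1 / (1 - x ^ 2) := by
        rw [lt_div_iff₀ h1]; linarith
      linarith
    have hmono2 : StrictMonoOn g (Ioc (-1) 0) := by
      apply strictMonoOn_of_deriv_pos (convex_Ioc (-1) 0)
        (contOn_arctanh_sub c (fun x hx => ⟨hx.1, by linarith [hx.2]⟩))
      intro x hx
      rw [interior_Ioc] at hx
      have hx' : x ∈ Ioo (-1 : ℝ) 1 := ⟨hx.1, by linarith [hx.2]⟩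
      rw [deriv_arctanh_sub c hx']
      have h1 : 0 < 1 - x ^ 2 := by nlinarith [hx.1, hx.2]
      have h2 : 1 - x ^ 2 < 1 := by nlinarith [hx.2, hx.1]
      have : 1 < 1 / (1 - x ^ 2) := by
        rw [lt_div_iff₀ h1]; linarith
      linarith
    constructor
    · intro hgu
      by_contra hne
      rcases lt_trichotomy u 0 with h | h | h
      · have := hmono2 ⟨hu.1, le_of_lt h⟩ ⟨by linarith, le_refl 0⟩ h
        rw [hg0] at this
        exact absurd hgu (ne_of_lt (by simpa [hg_def] using this))
      · exact hne h
      · have := hmono1 ⟨le_refl 0, by linarith⟩ ⟨le_of_lt h, hu.2⟩ h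
        rw [hg0] at this
        exact absurd hgu (ne_of_gt (by simpa [hg_def] using this))
    · intro h; subst h; simpa [hg_def] using hg0
  · -- case γ > 1/(z+1), i.e. c > 1
    intro hγgt
    have hc1 : 1 < c := by
      rw [hc_def]
      calc (1 : ℝ) = ((z : ℝ) + 1) * (1 / ((z : ℝ) + 1)) := by field_simp
        _ < ((z : ℝ) + 1) * γ := by exact mul_lt_mul_of_pos_left hγgt hz1
    have hicpos : 0 < 1 / c := by positivity
    have hiclt : 1 / c < 1 := by rw [div_lt_iff₀ hcpos]; linarith
    set a : ℝ := Real.sqrt (1 - 1 / c) with ha_def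
    have ha2 : a ^ 2 = 1 - 1 / c := Real.sq_sqrt (by linarith)
    have hapos : 0 < a := Real.sqrt_pos.mpr (by linarith)
    have halt1 : a < 1 := by
      nlinarith [ha2, hapos]
    -- g strictly decreasing on [0,a]
    have hanti : StrictAntiOn g (Icc 0 a) := by
      apply strictAntiOn_of_deriv_neg (convex_Icc 0 a)
        (contOn_arctanh_sub c (fun x hx => ⟨by linarith [hx.1], by linarith [hx.2]⟩))
      intro x hx
      rw [interior_Icc] at hx
      have hx' : x ∈ Ioo (-1 : ℝ) 1 := ⟨by linarith [hx.1], by linarith [hx.2]⟩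
      rw [deriv_arctanh_sub c hx']
      have hxa : x ^ 2 < 1 - 1 / c := by
        rw [← ha2]; nlinarith [hx.1, hx.2]
      have h1 : 0 < 1 - x ^ 2 := by linarith
      have hcc : c * (1 / c) = 1 := mul_one_div_cancel (ne_of_gt hcpos)
      have hm := mul_lt_mul_of_pos_left (show 1 / c < 1 - x ^ 2 by linarith) hcpos
      have : 1 / (1 - x ^ 2) < c := by
        rw [div_lt_iff₀ h1]; linarith
      linarith
    -- g strictly increasing on [a,1)
    have hmono : StrictMonoOn g (Ico a 1) := by
      apply strictMonoOn_of_deriv_pos (convex_Ico a 1)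
        (contOn_arctanh_sub c (fun x hx => ⟨by linarith [hx.1], hx.2⟩))
      intro x hx
      rw [interior_Ico] at hx
      have hx' : x ∈ Ioo (-1 : ℝ) 1 := ⟨by linarith [hx.1], hx.2⟩
      rw [deriv_arctanh_sub c hx']
      have hxa : 1 - 1 / c < x ^ 2 := by
        rw [← ha2]; nlinarith [hx.1, hx.2, hapos]
      have h1 : 0 < 1 - x ^ 2 := by nlinarith [hx.2, hx.1, hapos]
      have hcc : c * (1 / c) = 1 := mul_one_div_cancel (ne_of_gt hcpos)
      have hm := mul_lt_mul_of_pos_left (show 1 - x ^ 2 < 1 / c by linarith) hcpos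
      have : c < 1 / (1 - x ^ 2) := by
        rw [lt_div_iff₀ h1]; linarith
      linarith
    have hga_neg : g a < 0 := by
      have := hanti ⟨le_refl 0, le_of_lt hapos⟩ ⟨le_of_lt hapos, le_refl a⟩ hapos
      rw [hg0] at this; exact this
    -- choose b with g b > 0
    set b : ℝ := max ((a + 1) / 2) (1 - Real.exp (-2 * c) / 2) with hb_def
    have hab : a < b := lt_max_of_lt_left (by linarith)
    have hbpos : 0 < b := lt_max_of_lt_left (by linarith)
    have hexp_pos : 0 < Real.exp (-2 * c) := Real.exp_pos _
    have hexp_lt : Real.exp (-2 * c) < 1 := Real.exp_lt_one_iff.mpr (by linarith)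
    have hblt1 : b < 1 := by
      apply max_lt (by linarith) (by linarith)
    have h1mb : 0 < 1 - b := by linarith
    have h1mb_le : 1 - b ≤ Real.exp (-2 * c) := by
      have : 1 - Real.exp (-2 * c) / 2 ≤ b := le_max_right _ _
      linarith
    have hgb_pos : 0 < g b := by
      have hlogb : Real.log (1 - b) ≤ -2 * c := by
        calc Real.log (1 - b) ≤ Real.log (Real.exp (-2 * c)) :=
              Real.log_le_log h1mb h1mb_le
          _ = -2 * c := Real.log_exp _
      have hlog1b : 0 ≤ Real.log (1 + b) := Real.log_nonneg (by linarith)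
      have harc : arctanh b = (1 / 2) * (Real.log (1 + b) - Real.log (1 - b)) := by
        unfold arctanh
        rw [Real.log_div (ne_of_gt (show (0:ℝ) < 1 + b by linarith)) (ne_of_gt h1mb)]
      have : c ≤ arctanh b := by rw [harc]; linarith
      have hcb : c * b < c := mul_lt_of_lt_one_right hcpos hblt1
      show 0 < arctanh b - c * b
      linarith
    -- intermediate value theorem on [a, b]
    have hivt : (0 : ℝ) ∈ g '' Ioo a b := by
      apply intermediate_value_Ioo (le_of_lt hab)
        (contOn_arctanh_sub c (fun x hx => ⟨by linarith [hx.1], by linarith [hx.2]⟩))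
      exact ⟨hga_neg, hgb_pos⟩
    obtain ⟨ustar, hust_mem, hust_zero⟩ := hivt
    have hust_pos : 0 < ustar := by
      have := hust_mem.1; linarith
    have hust_lt1 : ustar < 1 := by
      have := hust_mem.2; linarith
    refine ⟨ustar, ⟨hust_pos, hust_lt1⟩, ?_⟩
    -- uniqueness of positive zero
    have huniq : ∀ v ∈ Ioo (0 : ℝ) 1, g v = 0 → v = ustar := by
      intro v hv hgv
      rcases le_or_gt v a with h | h
      · exfalso
        have := hanti ⟨le_refl 0, le_of_lt hapos⟩ ⟨le_of_lt hv.1, h⟩ hv.1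
        rw [hg0] at this
        linarith
      · exact hmono.injOn ⟨le_of_lt h, hv.2⟩
          ⟨le_of_lt hust_mem.1, hust_lt1⟩
          (by rw [hgv, hust_zero])
    intro u hu
    constructor
    · intro hgu
      rcases lt_trichotomy u 0 with h | h | h
      · right; right
        have hnu : -u ∈ Ioo (0 : ℝ) 1 := ⟨by linarith, by linarith [hu.1]⟩
        have : g (-u) = 0 := by rw [hgodd u]; simp [hg_def] at hgu ⊢; linarith [hgu]
        have := huniq (-u) hnu this
        linarith
      · left; exact h
      · right; left
        exact huniq u ⟨h, hu.2⟩ hgu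
    · intro h
      rcases h with h | h | h
      · subst h; simpa [hg_def] using hg0
      · subst h; exact hust_zero
      · subst h
        have : g (-ustar) = 0 := by rw [hgodd]; rw [hust_zero]; ring
        simpa [hg_def] using this
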